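/- arXiv:1912.02211 — 2 statements merged into one kernel-verified Lean document; each statement's English description precedes it below -/
import Mathlib

section
/- (Lovász Replication Lemma) If G' is obtained from a perfect graph G by replicating a single vertex, then G' is perfect. -/
open SimpleGraph

variable {V A B W : Type*}

/-- A proper coloring of `G` with natural-number colors. -/
def IsProperColoring (G : SimpleGraph V) (f : V → ℕ) : Prop :=
  ∀ u v, G.Adj u v → f u ≠ f v

/-- The number of distinct colors used by `f` on all vertices. -/
def colorsUsed [Fintype V] (f : V → ℕ) : ℕ := (Finset.univ.image f).card

/-- `n` is the clique number of `G`. -/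
def IsCliqueNum (G : SimpleGraph V) (n : ℕ) : Prop :=
  IsGreatest {k | ∃ s : Finset V, G.IsNClique k s} n

/-- `n` is the chromatic number of `G`. -/
def IsChromNum [Fintype V] (G : SimpleGraph V) (n : ℕ) : Prop :=
  IsLeast {k | ∃ f : V → ℕ, IsProperColoring G f ∧ colorsUsed f = k} n

/-- A graph is nice if its chromatic number equals its clique number. -/
def Nice [Fintype V] (G : SimpleGraph V) : Prop :=
  ∀ n, IsCliqueNum G n → IsChromNum G n

/-- A graph is perfect if every induced subgraph is nice. -/
def IsPerfect [Fintype V] (G : SimpleGraph V) : Prop :=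
  ∀ s : Finset V, Nice (G.induce (s : Set V))

/-- A stable (independent) set of vertices. -/
def IsStableSet (G : SimpleGraph V) (I : Set V) : Prop :=
  ∀ x ∈ I, ∀ y ∈ I, ¬ G.Adj x y

/-- `n` is the independence number of `G`. -/
def IsIndepNum (G : SimpleGraph V) (n : ℕ) : Prop :=
  IsGreatest {k | ∃ I : Finset V, IsStableSet G (I : Set V) ∧ I.card = k} n

/-- A stable cover: a collection of stable sets covering all vertices. -/
def IsStableCover (G : SimpleGraph V) (C : Finset (Finset V)) : Prop :=
  (∀ I ∈ C, IsStableSet G (I : Set V)) ∧ ∀ v : V, ∃ I ∈ C, v ∈ I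

/-- A clique cover: a collection of cliques covering all vertices. -/
def IsCliqueCover (G : SimpleGraph V) (C : Finset (Finset V)) : Prop :=
  (∀ K ∈ C, G.IsClique (K : Set V)) ∧ ∀ v : V, ∃ K ∈ C, v ∈ K

/-- `G` and `G'` are isomorphic via the mutually inverse maps `f` and `g`. -/
def IsoUsing (G : SimpleGraph A) (G' : SimpleGraph B) (f : A → B) (g : B → A) : Prop :=
  Function.Surjective f ∧ Function.Surjective g ∧ (∀ x, g (f x) = x) ∧
  (∀ x y, G.Adj x y ↔ G'.Adj (f x) (f y)) ∧ (∀ x y, G'.Adj x y ↔ G.Adj (g x) (g y))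

/-- The graph obtained from `G` by replicating the vertex `a`:
the new vertex `none` is adjacent to `a` and to all neighbours of `a`. -/
def replicate (G : SimpleGraph V) (a : V) : SimpleGraph (Option V) :=
  SimpleGraph.fromRel (fun x y => match x, y with
    | some x, some y => G.Adj x y
    | some x, none => x = a ∨ G.Adj x a
    | none, _ => False)

/-- `G'` is an expansion of `G`, witnessed by the backward map `g`. -/
def IsExpansionOf (G : SimpleGraph A) (G' : SimpleGraph B) (g : B → A) : Prop :=
  Function.Surjective g ∧
  (∀ x y : B, x ≠ y → g x = g y → G'.Adj x y) ∧
  (∀ x y : B, g x ≠ g y → (G'.Adj x y ↔ G.Adj (g x) (g y)))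

/-!
Write `π` for `Option.getD · a : Option V → V`, which identifies the copy `none` with `a`. Two
vertices of `replicate G a` are adjacent iff they are distinct and their images under `π` are equal
or adjacent in `G`. So an induced subgraph on which `π` is injective is an induced subgraph of `G`,
and any other induced subgraph contains both copies of `a` and is the replication of an induced
subgraph of `G`. It remains to colour `replicate G a` with `ω` colours, `ω` its clique number.

If `a` lies in a maximum clique of `G`, then `ω = ω(G) + 1` and the copy gets a new colour.
Otherwise take an `ω(G)`-colouring of `G` and let `A` be the colour class of `a`. Every maximum
clique of `G` sees all colours, so it meets `A`, and it avoids `a`; hence `G - (A \ {a})` has clique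
number `< ω(G)` and, being perfect, is `(ω(G) - 1)`-colourable. The stable set `(A \ {a}) ∪ {none}`
takes one more colour.
-/

namespace SimpleGraph

variable {G : SimpleGraph V} {H : SimpleGraph W} {n : ℕ}

lemma IsProperColoring.colorable [Fintype V] {f : V → ℕ} (hf : IsProperColoring G f) :
    G.Colorable (colorsUsed f) := by
  let C : G.Coloring (Finset.univ.image f) :=
    Coloring.mk (fun v => ⟨f v, Finset.mem_image_of_mem f (Finset.mem_univ v)⟩)
      fun huv h => hf _ _ huv (congrArg Subtype.val h)
  simpa [colorsUsed] using C.colorable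

lemma Colorable.exists_isProperColoring [Fintype V] {n : ℕ} (h : G.Colorable n) :
    ∃ f, IsProperColoring G f ∧ colorsUsed f ≤ n := by
  obtain ⟨C, hC⟩ := (colorable_iff_exists_bdd_nat_coloring n).1 h
  refine ⟨C, fun _ _ huv => C.valid huv, ?_⟩
  calc colorsUsed C ≤ (Finset.range n).card :=
        Finset.card_le_card (by simpa [Finset.image_subset_iff] using hC)
    _ = n := Finset.card_range n

lemma isCliqueNum_cliqueNum [Finite V] : IsCliqueNum G G.cliqueNum :=
  ⟨G.exists_isNClique_cliqueNum, fun _ ⟨_, hs⟩ => hs.card_eq ▸ hs.isClique.card_le_cliqueNum⟩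

lemma cliqueNum_le_colorsUsed [Fintype V] {f : V → ℕ} (hf : IsProperColoring G f) :
    G.cliqueNum ≤ colorsUsed f := by
  obtain ⟨s, hs⟩ := G.exists_isNClique_cliqueNum
  exact hs.card_eq ▸ hs.isClique.card_le_of_colorable hf.colorable

lemma nice_iff_colorable_cliqueNum [Fintype V] : Nice G ↔ G.Colorable G.cliqueNum := by
  refine ⟨fun h => ?_, fun h n hn => ?_⟩
  · obtain ⟨⟨f, hf, hfω⟩, -⟩ := h _ isCliqueNum_cliqueNum
    exact hfω ▸ hf.colorable
  · obtain ⟨f, hf, hfω⟩ := h.exists_isProperColoring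
    rw [hn.unique isCliqueNum_cliqueNum]
    exact ⟨⟨f, hf, hfω.antisymm (cliqueNum_le_colorsUsed hf)⟩,
      fun _ ⟨g, hg, hgk⟩ => hgk ▸ cliqueNum_le_colorsUsed hg⟩

lemma IsNClique.map_embedding {s : Finset V} (hs : G.IsNClique n s) (f : G ↪g H) :
    H.IsNClique n (s.map f.toEmbedding) :=
  hs.map.mono <| by rw [map_le_iff_le_comap]; exact f.comap_eq.ge

lemma cliqueNum_le_of_embedding [Finite W] (f : G ↪g H) : G.cliqueNum ≤ H.cliqueNum := by
  obtain ⟨s, hs⟩ := G.exists_isNClique_cliqueNum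
  exact (hs.map_embedding f).card_eq ▸ (hs.map_embedding f).isClique.card_le_cliqueNum

lemma colorable_cliqueNum_of_iso [Finite W] (e : G ≃g H) (hG : G.Colorable G.cliqueNum) :
    H.Colorable H.cliqueNum :=
  ((colorable_congr e).1 hG).mono (cliqueNum_le_of_embedding e.toEmbedding)

lemma Nice.induce_of_embedding [Fintype V] {s : Set W} [Fintype s] (f : G ↪g H)
    (hs : Set.range f = s) (hG : Nice G) : Nice (H.induce s) := by
  subst hs
  rw [nice_iff_colorable_cliqueNum] at hG ⊢
  exact colorable_cliqueNum_of_iso f.isoInduceRange hG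

lemma IsPerfect.nice_of_embedding [Fintype V] [Fintype W] (hG : IsPerfect G) (f : H ↪g G) :
    Nice H := by
  classical
  have hrange := nice_iff_colorable_cliqueNum.1 (hG (Set.range f).toFinset)
  rw [Set.coe_toFinset] at hrange
  exact nice_iff_colorable_cliqueNum.2 (colorable_cliqueNum_of_iso f.isoInduceRange.symm hrange)

lemma IsPerfect.of_embedding [Fintype V] [Fintype W] (hG : IsPerfect G) (f : H ↪g G) :
    IsPerfect H :=
  fun _ => hG.nice_of_embedding (f.comp (Embedding.induce _))

lemma IsPerfect.nice [Fintype V] (hG : IsPerfect G) : Nice G :=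
  hG.nice_of_embedding Embedding.refl

lemma Colorable.succ_of_isIndepSet_compl {s : Set V} (hs : G.IsIndepSet sᶜ)
    (h : (G.induce s).Colorable n) : G.Colorable (n + 1) := by
  classical
  obtain ⟨C⟩ := h
  let D : G.Coloring (Option (Fin n)) :=
    Coloring.mk (fun v => if hv : v ∈ s then some (C ⟨v, hv⟩) else none) fun {u v} huv => by
      by_cases hu : u ∈ s <;> by_cases hv : v ∈ s <;> simp only [hu, hv, dite_true, dite_false]
      · exact fun h => C.valid (show (G.induce s).Adj ⟨u, hu⟩ ⟨v, hv⟩ from huv)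
          (Option.some_injective _ h)
      · exact Option.some_ne_none _
      · exact (Option.some_ne_none _).symm
      · exact absurd huv (hs hu hv huv.ne)
  simpa using D.colorable

lemma cliqueNum_induce_lt [Finite V] {T : Set V}
    (hT : ∀ K : Finset V, G.IsNClique G.cliqueNum K → ¬ (K : Set V) ⊆ T) :
    (G.induce T).cliqueNum < G.cliqueNum := by
  refine (cliqueNum_induce_le T).lt_of_ne fun heq => ?_
  obtain ⟨K, hK⟩ := (G.induce T).exists_isNClique_cliqueNum
  rw [isNClique_induce_iff, heq] at hK
  refine hT _ hK ?_
  rw [Finset.coe_map]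
  rintro _ ⟨v, -, rfl⟩
  exact v.2

variable (G) in
lemma replicate_adj {a : V} {x y : Option V} :
    (replicate G a).Adj x y ↔ x ≠ y ∧ (x.getD a = y.getD a ∨ G.Adj (x.getD a) (y.getD a)) := by
  cases x <;> cases y <;> simp [replicate, eq_comm, G.adj_comm]
  exact fun hne heq => absurd heq hne

lemma replicate_adj_of_getD_ne {a : V} {x y : Option V} (h : x ≠ y → x.getD a ≠ y.getD a) :
    (replicate G a).Adj x y ↔ G.Adj (x.getD a) (y.getD a) := by
  rw [replicate_adj]
  refine ⟨fun ⟨hne, hadj⟩ => hadj.resolve_left (h hne), fun hadj => ⟨?_, Or.inr hadj⟩⟩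
  rintro rfl
  exact hadj.ne rfl

variable (G) in
def Embedding.toReplicate (a : V) : G ↪g replicate G a where
  toFun := some
  inj' := Option.some_injective V
  map_rel_iff' := replicate_adj_of_getD_ne fun h => (h <| congrArg some ·)

def Embedding.replicateMap (f : G ↪g H) {a : V} {b : W} (hab : f a = b) :
    replicate G a ↪g replicate H b where
  toFun := Option.map f
  inj' := Option.map_injective f.injective
  map_rel_iff' {x y} := by
    subst hab
    simp [replicate_adj, Option.getD_map, (Option.map_injective f.injective).eq_iff]

def Embedding.induceReplicateOfInjOn {a : V} {s : Set (Option V)}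
    (hs : s.InjOn (Option.getD · a)) : (replicate G a).induce s ↪g G where
  toFun x := x.1.getD a
  inj' x y hxy := Subtype.ext (hs x.2 y.2 hxy)
  map_rel_iff' {x y} :=
    (replicate_adj_of_getD_ne fun h => (h <| hs x.2 y.2 ·)).symm

lemma colorable_replicate_of_colorable_induce {a : V} {T : Set V} (hT : G.IsIndepSet Tᶜ)
    (haT : a ∈ T) (hNT : G.neighborSet a ⊆ T) (h : (G.induce T).Colorable n) :
    (replicate G a).Colorable (n + 1) := by
  let e := (Embedding.toReplicate G a).comp (Embedding.induce T)
  have hsome : ∀ v, some v ∉ Set.range e → v ∉ T := fun v hv hvT => hv ⟨⟨v, hvT⟩, rfl⟩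
  have hnone : ∀ v, (replicate G a).Adj none (some v) → v ∈ T := fun v hv => by
    rcases ((replicate_adj G).1 hv).2 with rfl | hav
    exacts [haT, hNT hav]
  refine Colorable.succ_of_isIndepSet_compl (s := Set.range e) ?_
    ((colorable_congr e.isoInduceRange).1 h)
  rintro (_ | u) hu (_ | v) hv huv hadj
  · exact huv rfl
  · exact hsome v hv (hnone v hadj)
  · exact hsome u hu (hnone u hadj.symm)
  · exact hT (hsome u hu) (hsome v hv) (fun huv' => huv (congrArg some huv'))
      ((Embedding.toReplicate G a).map_adj_iff.1 hadj)

lemma succ_cliqueNum_le_cliqueNum_replicate [Finite V] {a : V} {K : Finset V}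
    (hK : G.IsNClique G.cliqueNum K) (haK : a ∈ K) :
    G.cliqueNum + 1 ≤ (replicate G a).cliqueNum := by
  classical
  have hclique := (hK.map_embedding (Embedding.toReplicate G a)).insert (a := none) <| by
    simp only [Finset.mem_map, forall_exists_index, and_imp]
    rintro _ v hv rfl
    refine (replicate_adj G).2 ⟨(Option.some_ne_none v).symm, ?_⟩
    by_cases hav : a = v
    exacts [Or.inl hav, Or.inr (hK.isClique haK hv hav)]
  exact hclique.card_eq ▸ hclique.isClique.card_le_cliqueNum

lemma nice_replicate [Fintype V] (hG : IsPerfect G) (a : V) : Nice (replicate G a) := by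
  classical
  rw [nice_iff_colorable_cliqueNum]
  obtain ⟨C⟩ := nice_iff_colorable_cliqueNum.1 hG.nice
  by_cases ha : ∃ K, G.IsNClique G.cliqueNum K ∧ a ∈ K
  · obtain ⟨K, hK, haK⟩ := ha
    have hGuniv : (G.induce Set.univ).Colorable G.cliqueNum :=
      (colorable_congr G.induceUnivIso.symm).1 ⟨C⟩
    exact (colorable_replicate_of_colorable_induce (by simp) (Set.mem_univ a)
      (Set.subset_univ _) hGuniv).mono (succ_cliqueNum_le_cliqueNum_replicate hK haK)
  · push Not at ha
    set T : Set V := {v | v = a ∨ C v ≠ C a}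
    have hT : (G.induce T).cliqueNum < G.cliqueNum := cliqueNum_induce_lt fun K hK hKT => by
      obtain ⟨v, hvK, hv⟩ := C.surjOn_of_card_le_isClique hK.isClique (by simp [hK.card_eq])
        (Set.mem_univ (C a))
      rcases hKT hvK with rfl | hva
      exacts [ha K hK hvK, hva hv]
    have hGT := nice_iff_colorable_cliqueNum.1 (hG.of_embedding (Embedding.induce T)).nice
    refine (colorable_replicate_of_colorable_induce (T := T) ?_ (Or.inl rfl) ?_ hGT).mono
      (hT.trans_le (cliqueNum_le_of_embedding (Embedding.toReplicate G a)))
    · intro u hu v hv _ huv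
      simp only [T, Set.mem_compl_iff, Set.mem_ofPred_eq, not_or, not_not] at hu hv
      exact C.valid huv (hu.2.trans hv.2.symm)
    · exact fun v hv => Or.inr (C.valid hv).symm

lemma none_mem_and_some_mem_of_not_injOn {a : V} {s : Set (Option V)}
    (hs : ¬ s.InjOn (Option.getD · a)) : none ∈ s ∧ some a ∈ s := by
  contrapose! hs
  rintro (_ | u) hu (_ | v) hv huv
  · rfl
  · cases (huv : a = v)
    exact absurd hv (hs hu)
  · cases (huv : u = a)
    exact absurd hu (hs hv)
  · exact congrArg some huv

lemma range_optionMap_subtype_val {s : Set (Option V)} (hs : none ∈ s) :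
    Set.range (Option.map ((↑) : {v | some v ∈ s} → V)) = s := by
  ext (_ | v)
  · exact ⟨fun _ => hs, fun _ => ⟨none, rfl⟩⟩
  · refine ⟨?_, fun hv => ⟨some ⟨v, hv⟩, rfl⟩⟩
    rintro ⟨_ | ⟨w, hw⟩, h⟩
    · cases h
    · cases h
      exact hw

end SimpleGraph

theorem stmt16 [Fintype V] (G : SimpleGraph V) (a : V) (hG : IsPerfect G) :
    IsPerfect (replicate G a) := by
  classical
  intro s
  by_cases hs : Set.InjOn (Option.getD · a) (s : Set (Option V))
  · exact hG.nice_of_embedding (Embedding.induceReplicateOfInjOn hs)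
  · obtain ⟨hnone, hsome⟩ := none_mem_and_some_mem_of_not_injOn hs
    let t : Set V := {v | some v ∈ (s : Set (Option V))}
    exact (nice_replicate (hG.of_embedding (Embedding.induce t)) ⟨a, hsome⟩).induce_of_embedding
      ((Embedding.induce t).replicateMap rfl) (range_optionMap_subtype_val hnone)
end

section
/- If G is a perfect graph with independence number n, then G admits a clique cover consisting of exactly n cliques. Consequently (Weak Perfect Graph Theorem), the complement of any perfect graph is perfect. -/
open SimpleGraph

variable {V A B W : Type*}

/-!
Lovász's theorem, by Gasparian's argument. If `G` is perfect, every induced subgraph `H` satisfies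
`|H| ≤ χ(H) α(H) = ω(H) α(H)`, because colour classes are stable. This inequality is invariant under
complementation, and on its own it forces `χ = ω` on every induced subgraph. Indeed, in a minimal
induced subgraph `s` with `χ > ω`, deleting any stable set leaves an `ω`-clique and deleting any
vertex leaves an `ω`-colourable graph. A maximum stable set `A₀` together with the colour classes of
`s - a`, `a ∈ A₀`, gives `αω + 1` stable sets `A_i`, each avoided by some `ω`-clique `K_i`. Every
`ω`-clique meets them `αω` times in total, so `|A_i ∩ K_j| = 1 - δ_ij`. The incidence vectors of
the `A_i` are then linearly independent in `ℚ^s`, so `αω + 1 ≤ |s|`, a contradiction. Hence `Gᶜ`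
is perfect, and an `α`-colouring of `Gᶜ` is a cover of `G` by `α` cliques.
-/

open Finset

theorem linearIndependent_of_dotProduct_eq_ite {ι X 𝕜 : Type*} [Fintype ι] [DecidableEq ι]
    [Fintype X] [Field 𝕜] [CharZero 𝕜] {v w : ι → X → 𝕜}
    (h : ∀ i j, v i ⬝ᵥ w j = if i = j then 0 else 1) (hι : Fintype.card ι ≠ 1) :
    LinearIndependent 𝕜 v := by
  rw [Fintype.linearIndependent_iff]
  intro g hg
  set S := ∑ i, g i
  have hgS : ∀ j, g j = S := fun j => by
    have hj := congrArg (· ⬝ᵥ w j) hg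
    simp only [sum_dotProduct, smul_dotProduct, h, smul_eq_mul, mul_ite, mul_zero, mul_one,
      zero_dotProduct, sum_ite, sum_const_zero, zero_add, filter_ne'] at hj
    calc g j = ∑ i ∈ univ.erase j, g i + g j := by rw [hj, zero_add]
      _ = S := sum_erase_add _ _ (mem_univ j)
  have hS : S = Fintype.card ι * S :=
    calc S = ∑ _i : ι, S := sum_congr rfl fun i _ => hgS i
      _ = Fintype.card ι * S := by rw [sum_const, card_univ, nsmul_eq_mul]
  have hS0 : S = 0 := by
    have : ((Fintype.card ι : 𝕜) - 1) * S = 0 := by rw [sub_mul, ← hS]; ring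
    exact (mul_eq_zero.1 this).resolve_left (sub_ne_zero.2 (by exact_mod_cast hι))
  exact fun i => (hgS i).trans hS0

theorem card_le_card_of_card_inter_eq_ite {ι : Type*} [DecidableEq V] [Fintype ι] [DecidableEq ι]
    {s : Finset V} {A K : ι → Finset V} (hA : ∀ i, A i ⊆ s)
    (h : ∀ i j, #(A i ∩ K j) = if i = j then 0 else 1) (hι : Fintype.card ι ≠ 1) :
    Fintype.card ι ≤ #s := by
  let incidence (T : Finset V) (x : s) : ℚ := if (x : V) ∈ T then 1 else 0
  have hdot : ∀ i j, incidence (A i) ⬝ᵥ incidence (K j) = #(A i ∩ K j) := fun i j => by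
    simp only [dotProduct, incidence, ite_zero_mul_ite_zero, one_mul, ← mem_inter]
    rw [sum_coe_sort s (fun x => if x ∈ A i ∩ K j then (1 : ℚ) else 0), sum_boole,
      filter_mem_eq_inter, inter_eq_right.2 (inter_subset_left.trans (hA i))]
  have hli : LinearIndependent ℚ fun i => incidence (A i) :=
    linearIndependent_of_dotProduct_eq_ite (w := fun j => incidence (K j))
      (fun i j => by rw [hdot, h]; split_ifs <;> simp) hι
  simpa only [Module.finrank_fintype_fun_eq_card, Fintype.card_coe] using
    hli.fintype_card_le_finrank

theorem eq_ite_of_sum_add_one_eq_card {ι : Type*} [Fintype ι] [DecidableEq ι] {f : ι → ℕ} {j : ι}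
    (hle : ∀ i, f i ≤ 1) (hj : f j = 0) (hsum : ∑ i, f i + 1 = Fintype.card ι) (i : ι) :
    f i = if i = j then 0 else 1 := by
  have hsum' : ∑ i ∈ univ.erase j, f i = ∑ i ∈ univ.erase j, 1 := by
    rw [← sum_erase_add _ _ (mem_univ j), hj] at hsum
    simp only [sum_const, smul_eq_mul, mul_one, card_erase_of_mem (mem_univ j), card_univ]
    omega
  split_ifs with hij
  · rw [hij, hj]
  · exact (sum_eq_sum_iff_of_le fun i _ => hle i).1 hsum' i (mem_erase.2 ⟨hij, mem_univ i⟩)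

theorem sum_card_erase_add_card_inter [DecidableEq V] (K A : Finset V) :
    ∑ a ∈ A, #(K.erase a) + #(K ∩ A) = #A * #K := by
  calc ∑ a ∈ A, #(K.erase a) + #(K ∩ A)
      = ∑ a ∈ A, (#(K.erase a) + if a ∈ K then 1 else 0) := by
        rw [sum_add_distrib, sum_boole, filter_mem_eq_inter, inter_comm, Nat.cast_id]
    _ = ∑ _a ∈ A, #K := sum_congr rfl fun a _ => by
        split_ifs with ha
        · exact card_erase_add_one ha
        · rw [erase_eq_of_notMem ha, add_zero]
    _ = #A * #K := by rw [sum_const, smul_eq_mul]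

namespace SimpleGraph

section

def IsProperOn (G : SimpleGraph V) (s : Finset V) (f : V → ℕ) : Prop :=
  ∀ u ∈ s, ∀ v ∈ s, G.Adj u v → f u ≠ f v

def ColorableOn (G : SimpleGraph V) (s : Finset V) (k : ℕ) : Prop :=
  ∃ f : V → ℕ, (∀ v ∈ s, f v < k) ∧ G.IsProperOn s f

/-- The clique number `ω(G[s])`; the independence number `α(G[s])` is `Gᶜ.cliqueNumOn s`. -/
noncomputable def cliqueNumOn (G : SimpleGraph V) (s : Finset V) : ℕ :=
  sSup {k | ∃ t ⊆ s, G.IsNClique k t}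

variable {G : SimpleGraph V} {s t K I : Finset V} {k m : ℕ}

theorem isStableSet_iff_isClique_compl {I : Set V} : IsStableSet G I ↔ Gᶜ.IsClique I := by
  rw [isClique_compl]
  exact ⟨fun h x hx y hy _ => h x hx y hy, fun h x hx y hy hxy => h hx hy (G.ne_of_adj hxy) hxy⟩

theorem IsClique.card_inter_le_one [DecidableEq V] (hK : G.IsClique (K : Set V))
    (hI : IsStableSet G (I : Set V)) : #(K ∩ I) ≤ 1 := by
  refine card_le_one.2 fun x hx y hy => ?_
  rw [mem_inter] at hx hy
  by_contra hxy
  exact hI x hx.2 y hy.2 (hK hx.1 hy.1 hxy)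

theorem IsProperOn.isStableSet_filter {f : V → ℕ} (hf : G.IsProperOn s f) (j : ℕ) :
    IsStableSet G ↑(s.filter (f · = j)) := by
  intro x hx y hy hxy
  rw [coe_filter] at hx hy
  exact hf x hx.1 y hy.1 hxy (hx.2.trans hy.2.symm)

theorem isGreatest_cliqueNumOn (G : SimpleGraph V) (s : Finset V) :
    IsGreatest {k | ∃ t ⊆ s, G.IsNClique k t} (G.cliqueNumOn s) := by
  have hbdd : BddAbove {k | ∃ t ⊆ s, G.IsNClique k t} :=
    ⟨#s, fun _ ⟨t, hts, ht⟩ => ht.card_eq ▸ card_le_card hts⟩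
  exact ⟨Nat.sSup_mem ⟨0, ∅, empty_subset s, by simp⟩ hbdd, fun _ hk => le_csSup hbdd hk⟩

theorem IsClique.card_le_cliqueNumOn (hK : G.IsClique (K : Set V)) (hKs : K ⊆ s) :
    #K ≤ G.cliqueNumOn s :=
  (isGreatest_cliqueNumOn G s).2 ⟨K, hKs, hK, rfl⟩

theorem exists_isNClique_of_le_cliqueNumOn (h : k ≤ G.cliqueNumOn s) :
    ∃ t ⊆ s, G.IsNClique k t := by
  obtain ⟨t₀, ht₀s, ht₀⟩ := (isGreatest_cliqueNumOn G s).1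
  obtain ⟨t, htt₀, htk⟩ := exists_subset_card_eq (ht₀.card_eq ▸ h)
  exact ⟨t, htt₀.trans ht₀s, ht₀.isClique.subset (by exact_mod_cast htt₀), htk⟩

theorem cliqueNumOn_mono (h : t ⊆ s) : G.cliqueNumOn t ≤ G.cliqueNumOn s := by
  obtain ⟨K, hKt, hK⟩ := (isGreatest_cliqueNumOn G t).1
  exact hK.card_eq ▸ hK.isClique.card_le_cliqueNumOn (hKt.trans h)

theorem one_le_cliqueNumOn (hs : s.Nonempty) : 1 ≤ G.cliqueNumOn s := by
  obtain ⟨v, hv⟩ := hs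
  have hv' : G.IsClique (({v} : Finset V) : Set V) := by
    rw [coe_singleton]; exact isClique_singleton v
  simpa using hv'.card_le_cliqueNumOn (singleton_subset_iff.2 hv)

theorem colorableOn_empty (G : SimpleGraph V) (k : ℕ) : G.ColorableOn ∅ k :=
  ⟨0, by simp, by simp [IsProperOn]⟩

theorem ColorableOn.mono (h : G.ColorableOn s k) (hkm : k ≤ m) : G.ColorableOn s m :=
  let ⟨f, hlt, hf⟩ := h
  ⟨f, fun v hv => (hlt v hv).trans_le hkm, hf⟩

theorem ColorableOn.of_sdiff [DecidableEq V] (h : G.ColorableOn (s \ I) k)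
    (hI : IsStableSet G (I : Set V)) : G.ColorableOn s (k + 1) := by
  obtain ⟨f, hlt, hf⟩ := h
  have hlt' : ∀ v ∈ s, v ∉ I → f v < k := fun v hv hvI => hlt v (mem_sdiff.2 ⟨hv, hvI⟩)
  refine ⟨fun v => if v ∈ I then k else f v, fun v hv => ?_, fun u hu v hv huv => ?_⟩
  · dsimp only
    split_ifs with hvI
    · exact k.lt_succ_self
    · exact (hlt' v hv hvI).trans k.lt_succ_self
  · dsimp only
    split_ifs with huI hvI hvI
    · exact (hI u huI v hvI huv).elim
    · exact (hlt' v hv hvI).ne'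
    · exact (hlt' u hu huI).ne
    · exact hf u (mem_sdiff.2 ⟨hu, huI⟩) v (mem_sdiff.2 ⟨hv, hvI⟩) huv

theorem ColorableOn.card_le_of_isClique (h : G.ColorableOn s k) (hK : G.IsClique (K : Set V))
    (hKs : K ⊆ s) : #K ≤ k := by
  obtain ⟨f, hlt, hf⟩ := h
  have hinj : Set.InjOn f K := fun x hx y hy hxy => by
    by_contra hne
    exact hf x (hKs hx) y (hKs hy) (hK hx hy hne) hxy
  simpa using card_le_card_of_injOn f (fun v hv => mem_range.2 (hlt v (hKs hv))) hinj

theorem ColorableOn.cliqueNumOn_le (h : G.ColorableOn s k) : G.cliqueNumOn s ≤ k := by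
  obtain ⟨K, hKs, hK⟩ := (isGreatest_cliqueNumOn G s).1
  exact hK.card_eq ▸ h.card_le_of_isClique hK.isClique hKs

theorem ColorableOn.card_le_mul_cliqueNumOn_compl (h : G.ColorableOn s k) :
    #s ≤ k * Gᶜ.cliqueNumOn s := by
  obtain ⟨f, hlt, hf⟩ := h
  rw [card_eq_sum_card_fiberwise fun v hv => mem_range.2 (hlt v hv)]
  calc ∑ j ∈ range k, #(s.filter (f · = j))
      ≤ ∑ _j ∈ range k, Gᶜ.cliqueNumOn s := sum_le_sum fun j _ =>
        (isStableSet_iff_isClique_compl.1 (hf.isStableSet_filter j)).card_le_cliqueNumOn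
          (filter_subset _ s)
    _ = k * Gᶜ.cliqueNumOn s := by rw [sum_const, card_range, smul_eq_mul]

theorem sum_card_inter_filter_eq [DecidableEq V] {f : V → ℕ} (hf : ∀ v ∈ s, f v < k)
    (K : Finset V) : ∑ j : Fin k, #(K ∩ s.filter (f · = j)) = #(K ∩ s) := by
  rw [← sum_range fun j => #(K ∩ s.filter (f · = j))]
  simp_rw [inter_filter]
  exact (card_eq_sum_card_fiberwise fun v hv => mem_range.2 (hf v (mem_inter.1 hv).2)).symm

end

section

variable {G : SimpleGraph V} {s A₀ K : Finset V} {ω : ℕ} {c : V → V → ℕ}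

def stableFamily [DecidableEq V] (s A₀ : Finset V) (ω : ℕ) (c : V → V → ℕ) :
    Option (A₀ × Fin ω) → Finset V
  | none => A₀
  | some (a, j) => (s.erase a).filter (c a · = j)

theorem stableFamily_subset [DecidableEq V] (hA₀s : A₀ ⊆ s) : ∀ i, stableFamily s A₀ ω c i ⊆ s
  | none => hA₀s
  | some (a, _) => (filter_subset _ _).trans (erase_subset (a : V) s)

theorem isStableSet_stableFamily [DecidableEq V] (hA₀ : IsStableSet G (A₀ : Set V))
    (hc : ∀ a ∈ A₀, G.IsProperOn (s.erase a) (c a)) :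
    ∀ i, IsStableSet G (stableFamily s A₀ ω c i : Set V)
  | none => hA₀
  | some (a, _) => (hc a a.2).isStableSet_filter _

theorem sum_card_inter_stableFamily [DecidableEq V] (hc : ∀ a ∈ A₀, ∀ v ∈ s.erase a, c a v < ω)
    (hKs : K ⊆ s) (hK : #K = ω) : ∑ i, #(K ∩ stableFamily s A₀ ω c i) = #A₀ * ω := by
  have hclasses : ∀ a : A₀, ∑ j : Fin ω, #(K ∩ stableFamily s A₀ ω c (some (a, j))) =
      #(K.erase a) := fun a => by
    simp only [stableFamily]
    rw [sum_card_inter_filter_eq (hc a a.2), inter_erase, inter_eq_left.2 hKs]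
  rw [Fintype.sum_option, Fintype.sum_prod_type, sum_congr rfl fun a _ => hclasses a,
    sum_coe_sort A₀ fun a => #(K.erase a), add_comm, ← hK]
  exact sum_card_erase_add_card_inter K A₀

theorem card_mul_lt_card_of_colorableOn_erase [DecidableEq V] (hA₀s : A₀ ⊆ s)
    (hA₀ : IsStableSet G (A₀ : Set V)) (hpos : 0 < #A₀ * ω)
    (hcol : ∀ a ∈ A₀, G.ColorableOn (s.erase a) ω)
    (hclique : ∀ I ⊆ s, IsStableSet G (I : Set V) → ∃ K ⊆ s \ I, G.IsNClique ω K) :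
    #A₀ * ω < #s := by
  choose! c hc_lt hc_proper using hcol
  set A := stableFamily s A₀ ω c
  have hAs : ∀ i, A i ⊆ s := stableFamily_subset hA₀s
  have hA : ∀ i, IsStableSet G (A i : Set V) := isStableSet_stableFamily hA₀ hc_proper
  choose K hKs hK using fun i => hclique (A i) (hAs i) (hA i)
  have hcard : Fintype.card (Option (A₀ × Fin ω)) = #A₀ * ω + 1 := by simp
  have hinter : ∀ i j, #(A i ∩ K j) = if i = j then 0 else 1 := fun i j => by
    rw [inter_comm]
    refine eq_ite_of_sum_add_one_eq_card (f := fun i => #(K j ∩ A i))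
      (fun i => (hK j).isClique.card_inter_le_one (hA i)) ?_ ?_ i
    · exact card_eq_zero.2 (disjoint_iff_inter_eq_empty.1 (subset_sdiff.1 (hKs j)).2)
    · rw [sum_card_inter_stableFamily hc_lt ((hKs j).trans sdiff_subset) (hK j).card_eq, hcard]
  have := card_le_card_of_card_inter_eq_ite hAs hinter (by omega)
  omega

theorem colorableOn_cliqueNumOn_of_forall_card_le {s : Finset V}
    (h : ∀ t ⊆ s, #t ≤ G.cliqueNumOn t * Gᶜ.cliqueNumOn t) :
    G.ColorableOn s (G.cliqueNumOn s) := by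
  classical
  induction s using Finset.strongInduction with
  | H s ih =>
  by_contra hs
  have hsub : ∀ t ⊂ s, G.ColorableOn t (G.cliqueNumOn t) := fun t ht =>
    ih t ht fun u hu => h u (hu.trans ht.subset)
  have hne : s.Nonempty := nonempty_iff_ne_empty.2 fun h => hs (h ▸ colorableOn_empty G _)
  obtain ⟨A₀, hA₀s, hA₀⟩ := (isGreatest_cliqueNumOn Gᶜ s).1
  have hpos : 0 < #A₀ * G.cliqueNumOn s := by
    rw [hA₀.card_eq]; exact Nat.mul_pos (one_le_cliqueNumOn hne) (one_le_cliqueNumOn hne)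
  have hcol : ∀ a ∈ A₀, G.ColorableOn (s.erase a) (G.cliqueNumOn s) := fun a ha =>
    (hsub _ (erase_ssubset (hA₀s ha))).mono (cliqueNumOn_mono (erase_subset (a : V) s))
  have hclique : ∀ I ⊆ s, IsStableSet G (I : Set V) →
      ∃ K ⊆ s \ I, G.IsNClique (G.cliqueNumOn s) K := by
    intro I hIs hI
    refine exists_isNClique_of_le_cliqueNumOn (not_lt.1 fun hlt => hs ?_)
    rcases I.eq_empty_or_nonempty with rfl | hIne
    · simp at hlt
    -- `I` can be added to a colouring of `s \ I` as one more colour class.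
    exact ((hsub _ (sdiff_ssubset hIs hIne)).of_sdiff hI).mono hlt
  have hlt := card_mul_lt_card_of_colorableOn_erase hA₀s
    (isStableSet_iff_isClique_compl.2 hA₀.isClique) hpos hcol hclique
  have hle := h s subset_rfl
  rw [hA₀.card_eq, mul_comm] at hlt
  omega

end

section

variable {G : SimpleGraph V} {s : Finset V}

theorem isCliqueNum_induce_iff {n : ℕ} :
    IsCliqueNum (G.induce (s : Set V)) n ↔ n = G.cliqueNumOn s := by
  classical
  have hset : {k | ∃ t : Finset (s : Set V), (G.induce (s : Set V)).IsNClique k t} =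
      {k | ∃ t ⊆ s, G.IsNClique k t} := by
    ext k
    constructor
    · rintro ⟨t, ht⟩
      exact ⟨_, fun v hv => by obtain ⟨x, -, rfl⟩ := mem_map.1 hv; exact x.2,
        (isNClique_induce_iff _ _ _).1 ht⟩
    · rintro ⟨t, hts, ht⟩
      refine ⟨t.subtype (· ∈ (s : Set V)), (isNClique_induce_iff _ _ _).2 ?_⟩
      rwa [subtype_map_of_mem fun v hv => mem_coe.2 (hts hv)]
  rw [IsCliqueNum, hset]
  exact ⟨fun h => h.unique (isGreatest_cliqueNumOn G s), fun h => h ▸ isGreatest_cliqueNumOn G s⟩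

theorem colorableOn_colorsUsed {f : ↥(s : Set V) → ℕ}
    (hf : IsProperColoring (G.induce (s : Set V)) f) : G.ColorableOn s (colorsUsed f) := by
  classical
  let e := (univ.image f).equivFin
  let g : V → ℕ := fun v =>
    if hv : v ∈ s then e ⟨f ⟨v, hv⟩, mem_image_of_mem f (mem_univ _)⟩ else 0
  have hg : ∀ v (hv : v ∈ s), g v = e ⟨f ⟨v, hv⟩, mem_image_of_mem f (mem_univ _)⟩ :=
    fun v hv => dif_pos hv
  refine ⟨g, fun v hv => hg v hv ▸ Fin.isLt _, fun u hu v hv huv hguv => ?_⟩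
  rw [hg u hu, hg v hv, Fin.val_inj, e.apply_eq_iff_eq, Subtype.mk.injEq] at hguv
  exact hf ⟨u, hu⟩ ⟨v, hv⟩ huv hguv

theorem ColorableOn.exists_isProperColoring_colorsUsed_le {k : ℕ}
    (h : G.ColorableOn s k) :
    ∃ f : ↥(s : Set V) → ℕ, IsProperColoring (G.induce (s : Set V)) f ∧ colorsUsed f ≤ k := by
  obtain ⟨f, hlt, hf⟩ := h
  refine ⟨fun v => f v, fun u v huv => hf u u.2 v v.2 huv, ?_⟩
  calc colorsUsed (fun v : (s : Set V) => f v) ≤ #(range k) :=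
        card_le_card fun j hj => by
          obtain ⟨v, -, rfl⟩ := mem_image.1 hj
          exact mem_range.2 (hlt v v.2)
    _ = k := card_range k

theorem nice_induce_iff :
    Nice (G.induce (s : Set V)) ↔ G.ColorableOn s (G.cliqueNumOn s) := by
  constructor
  · intro h
    obtain ⟨f, hf, hfω⟩ := (h _ (isCliqueNum_induce_iff.2 rfl)).1
    exact hfω ▸ colorableOn_colorsUsed hf
  · intro h n hn
    rw [isCliqueNum_induce_iff.1 hn]
    obtain ⟨f, hf, hfω⟩ := h.exists_isProperColoring_colorsUsed_le
    refine ⟨⟨f, hf, hfω.antisymm (colorableOn_colorsUsed hf).cliqueNumOn_le⟩, ?_⟩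
    rintro k ⟨f', hf', rfl⟩
    exact (colorableOn_colorsUsed hf').cliqueNumOn_le

end

end SimpleGraph

theorem IsCliqueCover.card_le {G : SimpleGraph V} {C : Finset (Finset V)} {I : Finset V}
    (hC : IsCliqueCover G C) (hI : IsStableSet G (I : Set V)) : #I ≤ #C := by
  choose F hFC hvF using hC.2
  refine card_le_card_of_injOn F (fun v _ => hFC v) fun x hx y hy hxy => ?_
  by_contra hne
  exact hI x hx y hy (hC.1 _ (hFC y) (hxy ▸ hvF x) (hvF y) hne)

theorem IsIndepNum.cliqueNumOn_compl_univ [Fintype V] {G : SimpleGraph V} {n : ℕ}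
    (hn : IsIndepNum G n) : Gᶜ.cliqueNumOn univ = n := by
  refine (isGreatest_cliqueNumOn Gᶜ univ).unique ?_
  simpa only [IsIndepNum, isStableSet_iff_isClique_compl, isNClique_iff, subset_univ, true_and]
    using hn

theorem exists_isCliqueCover_card_eq [Fintype V] {G : SimpleGraph V} {n : ℕ}
    (hn : IsIndepNum G n) (h : Gᶜ.ColorableOn univ n) :
    ∃ C : Finset (Finset V), IsCliqueCover G C ∧ #C = n := by
  classical
  obtain ⟨f, hlt, hf⟩ := h
  let C := (range n).image fun j => univ.filter (f · = j)
  have hC : IsCliqueCover G C := by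
    refine ⟨fun K hK => ?_, fun v => ⟨_, mem_image_of_mem _ (mem_range.2 (hlt v (mem_univ v))),
      mem_filter.2 ⟨mem_univ v, rfl⟩⟩⟩
    obtain ⟨j, -, rfl⟩ := mem_image.1 hK
    simpa using isStableSet_iff_isClique_compl.1 (hf.isStableSet_filter j)
  obtain ⟨I, hI, rfl⟩ := hn.1
  exact ⟨C, hC, le_antisymm (card_image_le.trans (card_range _).le) (hC.card_le hI)⟩

theorem stmt19 [Fintype V] (G : SimpleGraph V) (n : ℕ)
    (hG : IsPerfect G) (hn : IsIndepNum G n) :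
    (∃ C : Finset (Finset V), IsCliqueCover G C ∧ C.card = n) ∧ IsPerfect Gᶜ := by
  have hcol : ∀ s : Finset V, G.ColorableOn s (G.cliqueNumOn s) := fun s =>
    nice_induce_iff.1 (hG s)
  have hcol_compl : ∀ s : Finset V, Gᶜ.ColorableOn s (Gᶜ.cliqueNumOn s) := fun s =>
    colorableOn_cliqueNumOn_of_forall_card_le fun t _ => by
      rw [compl_compl, mul_comm]
      exact (hcol t).card_le_mul_cliqueNumOn_compl
  refine ⟨exists_isCliqueCover_card_eq hn ?_, fun s => nice_induce_iff.2 (hcol_compl s)⟩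
  exact hn.cliqueNumOn_compl_univ ▸ hcol_compl univ
end
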